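/- arXiv:2212.09640 — 4 statements merged into one kernel-verified Lean document; each statement's English description precedes it below -/
import Mathlib

section
/- The function d(z, z') := max( log((x-x')²/(y y')), |log(y/y')| ) ∨ 0, for z = x+iy, z' = x'+iy' in the upper half plane over F, defines a pseudo-metric: it is nonnegative, symmetric, vanishes on the diagonal, and satisfies the triangle inequality. -/
/-!
Writing `Q(z, z') = (x - x')² + y² + y'²`, the ultrametric property turns `log Q(z, z')` into
`max (log (x - x')²) (log y²) (log y'²)`, so the defining maximum of `d` is
`d(z, z') = log (Q(z, z') / (y y'))`; the `⊔ 0` is harmless since one of `log (y/y')`,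
`log (y'/y)` is nonnegative. The triangle inequality then comes from the polynomial inequality
`Q(z, z'') y'² ≤ 2 Q(z, z') Q(z', z'')` together with `log 2 = max (log 1) (log 1) = 0`.
-/

structure IsUltrametricLog {F Γ : Type*} [Field F] [LinearOrder F] [AddCommGroup Γ]
    [LinearOrder Γ] (log : F → WithBot Γ) : Prop where
  map_zero : log 0 = ⊥
  ne_bot : ∀ a : F, 0 < a → log a ≠ ⊥
  mono : ∀ a b : F, 0 < a → a ≤ b → log a ≤ log b
  map_mul : ∀ a b : F, 0 < a → 0 < b → log (a * b) = log a + log b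
  add_le : ∀ a b : F, 0 < a → 0 < b → log (a + b) ≤ max (log a) (log b)

namespace IsUltrametricLog

variable {F Γ : Type*} [Field F] [LinearOrder F] [AddCommGroup Γ] [LinearOrder Γ]
  {log : F → WithBot Γ}

theorem map_sq (hv : IsUltrametricLog log) {a : F} (ha : 0 < a) : log (a ^ 2) = log a + log a := by
  rw [sq, hv.map_mul a a ha ha]

variable [IsStrictOrderedRing F]

theorem map_one (hv : IsUltrametricLog log) : log 1 = 0 := by
  obtain ⟨g, hg⟩ := WithBot.ne_bot_iff_exists.1 (hv.ne_bot 1 one_pos)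
  have h := hv.map_mul 1 1 one_pos one_pos
  rw [mul_one, ← hg] at h
  have : g = g + g := by exact_mod_cast h
  rw [← hg, show g = 0 by simpa using this]
  rfl

theorem map_add (hv : IsUltrametricLog log) {a b : F} (ha : 0 ≤ a) (hb : 0 < b) :
    log (a + b) = max (log a) (log b) := by
  rcases ha.eq_or_lt with rfl | ha
  · simp [hv.map_zero]
  · exact le_antisymm (hv.add_le a b ha hb)
      (max_le (hv.mono a _ ha (by linarith)) (hv.mono b _ hb (by linarith)))

theorem map_two (hv : IsUltrametricLog log) : log (2 : F) = 0 := by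
  simpa [one_add_one_eq_two, hv.map_one] using hv.map_add zero_le_one one_pos

theorem map_div_add (hv : IsUltrametricLog log) {a b : F} (ha : 0 ≤ a) (hb : 0 < b) :
    log (a / b) + log b = log a := by
  rcases ha.eq_or_lt with rfl | ha
  · simp [hv.map_zero]
  · rw [← hv.map_mul _ b (div_pos ha hb) hb, div_mul_cancel₀ _ hb.ne']

theorem zero_le_max_div (hv : IsUltrametricLog log) {a b : F} (ha : 0 < a) (hb : 0 < b) :
    0 ≤ max (log (a / b)) (log (b / a)) := by
  rw [← hv.map_one]
  rcases le_total a b with h | h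
  · exact le_max_of_le_right (hv.mono 1 _ one_pos ((one_le_div ha).2 h))
  · exact le_max_of_le_left (hv.mono 1 _ one_pos ((one_le_div hb).2 h))

end IsUltrametricLog

section CoshNumerator

variable {R : Type*} [CommRing R] [LinearOrder R] [IsStrictOrderedRing R]

/-- Over `ℝ` this is `2 y y' cosh` of the hyperbolic distance between `x + iy` and `x' + iy'`. -/
def coshNumerator (z z' : R × R) : R := (z.1 - z'.1) ^ 2 + (z.2 ^ 2 + z'.2 ^ 2)

theorem coshNumerator_pos {z : R × R} (hz : 0 < z.2) (z' : R × R) : 0 < coshNumerator z z' := by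
  unfold coshNumerator; positivity

theorem coshNumerator_mul_sq_le (z z' z'' : R × R) :
    coshNumerator z z'' * z'.2 ^ 2 ≤ 2 * (coshNumerator z z' * coshNumerator z' z'') := by
  have hx : (z.1 - z''.1) ^ 2 ≤ 2 * (z.1 - z'.1) ^ 2 + 2 * (z'.1 - z''.1) ^ 2 := by
    nlinarith [sq_nonneg (z.1 - 2 * z'.1 + z''.1)]
  unfold coshNumerator
  nlinarith [mul_le_mul_of_nonneg_right hx (sq_nonneg z'.2), sq_nonneg z.2, sq_nonneg z'.2,
    sq_nonneg z''.2, sq_nonneg (z.1 - z'.1), sq_nonneg (z'.1 - z''.1)]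

end CoshNumerator

section BrumfielDist

variable {F Γ : Type*} [Field F] [AddCommGroup Γ] [LinearOrder Γ]

def brumfielDist (log : F → WithBot Γ) (z z' : F × F) : WithBot Γ :=
  max (log ((z.1 - z'.1) ^ 2 / (z.2 * z'.2))) (max (log (z.2 / z'.2)) (log (z'.2 / z.2))) ⊔ 0

theorem brumfielDist_comm (log : F → WithBot Γ) (z z' : F × F) :
    brumfielDist log z z' = brumfielDist log z' z := by
  rw [brumfielDist, brumfielDist, ← neg_sub, neg_sq, mul_comm z.2, max_comm (log (z.2 / z'.2))]

variable [LinearOrder F] [IsStrictOrderedRing F] {log : F → WithBot Γ}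

theorem IsUltrametricLog.brumfielDist_self (hv : IsUltrametricLog log) {z : F × F} (hz : 0 < z.2) :
    brumfielDist log z z = 0 := by
  simp [brumfielDist, div_self hz.ne', hv.map_one, hv.map_zero]

variable [IsOrderedAddMonoid Γ]

theorem IsUltrametricLog.brumfielDist_add_log (hv : IsUltrametricLog log) {z z' : F × F}
    (hz : 0 < z.2) (hz' : 0 < z'.2) :
    brumfielDist log z z' + (log z.2 + log z'.2) = log (coshNumerator z z') := by
  have hx : log ((z.1 - z'.1) ^ 2 / (z.2 * z'.2)) + (log z.2 + log z'.2) =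
      log ((z.1 - z'.1) ^ 2) := by
    rw [← hv.map_mul _ _ hz hz', hv.map_div_add (sq_nonneg _) (mul_pos hz hz')]
  have hy : log (z.2 / z'.2) + (log z.2 + log z'.2) = log (z.2 ^ 2) := by
    rw [add_comm (log z.2), ← add_assoc, hv.map_div_add hz.le hz', hv.map_sq hz]
  have hy' : log (z'.2 / z.2) + (log z.2 + log z'.2) = log (z'.2 ^ 2) := by
    rw [← add_assoc, hv.map_div_add hz'.le hz, hv.map_sq hz']
  rw [brumfielDist, sup_eq_left.2 ((hv.zero_le_max_div hz hz').trans (le_max_right _ _)),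
    ← max_add_add_right, ← max_add_add_right, hx, hy, hy', coshNumerator,
    hv.map_add (sq_nonneg _) (by positivity), hv.map_add (sq_nonneg _) (by positivity)]

theorem IsUltrametricLog.brumfielDist_triangle (hv : IsUltrametricLog log) {z z' z'' : F × F}
    (hz : 0 < z.2) (hz' : 0 < z'.2) (hz'' : 0 < z''.2) :
    brumfielDist log z z'' ≤ brumfielDist log z z' + brumfielDist log z' z'' := by
  have hc : log z.2 + log z''.2 + (log z'.2 + log z'.2) ≠ ⊥ := by
    simp [hv.ne_bot _ hz, hv.ne_bot _ hz', hv.ne_bot _ hz'']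
  rw [← WithBot.add_le_add_iff_right hc]
  calc brumfielDist log z z'' + (log z.2 + log z''.2 + (log z'.2 + log z'.2))
      = log (coshNumerator z z'' * z'.2 ^ 2) := by
        rw [← add_assoc, hv.brumfielDist_add_log hz hz'',
          hv.map_mul _ _ (coshNumerator_pos hz _) (by positivity), hv.map_sq hz']
    _ ≤ log (2 * (coshNumerator z z' * coshNumerator z' z'')) :=
        hv.mono _ _ (mul_pos (coshNumerator_pos hz _) (by positivity))
          (coshNumerator_mul_sq_le z z' z'')
    _ = brumfielDist log z z' + (log z.2 + log z'.2) +
          (brumfielDist log z' z'' + (log z'.2 + log z''.2)) := by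
        rw [hv.brumfielDist_add_log hz hz', hv.brumfielDist_add_log hz' hz'',
          hv.map_mul _ _ two_pos (mul_pos (coshNumerator_pos hz _) (coshNumerator_pos hz' _)),
          hv.map_two, zero_add, hv.map_mul _ _ (coshNumerator_pos hz _) (coshNumerator_pos hz' _)]
    _ = brumfielDist log z z' + brumfielDist log z' z'' +
          (log z.2 + log z''.2 + (log z'.2 + log z'.2)) := by
        abel

end BrumfielDist

theorem brumfiel_pseudometric_general {F : Type*} [Field F] [LinearOrder F] [IsStrictOrderedRing F]
    (log : F → WithBot ℚ)
    (hzero : log 0 = ⊥)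
    (hnebot : ∀ a : F, 0 < a → log a ≠ ⊥)
    (hmono : ∀ a b : F, 0 < a → a ≤ b → log a ≤ log b)
    (hmul : ∀ a b : F, 0 < a → 0 < b → log (a * b) = log a + log b)
    (hadd : ∀ a b : F, 0 < a → 0 < b → log (a + b) ≤ max (log a) (log b))
    -- the distance function on `H_F = {(x, y) : y > 0}`:
    (d : F × F → F × F → WithBot ℚ)
    (hd : ∀ z z' : F × F,
      d z z' = max (log ((z.1 - z'.1) ^ 2 / (z.2 * z'.2)))
          (max (log (z.2 / z'.2)) (log (z'.2 / z.2))) ⊔ 0) :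
    ∀ z z' z'' : F × F, 0 < z.2 → 0 < z'.2 → 0 < z''.2 →
      (0 ≤ d z z') ∧ (d z z = 0) ∧ (d z z' = d z' z) ∧
        (d z z'' ≤ d z z' + d z' z'') := by
  have hv : IsUltrametricLog log := ⟨hzero, hnebot, hmono, hmul, hadd⟩
  obtain rfl : d = brumfielDist log := funext₂ hd
  intro z z' z'' hz hz' hz''
  exact ⟨le_sup_right, hv.brumfielDist_self hz, brumfielDist_comm log z z',
    hv.brumfielDist_triangle hz hz' hz''⟩

/-- Brumfiel's distance on the upper half plane over a real closed ordered field `F`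
with an order-compatible surjective `ℚ`-valuation `-log`:
`d(z,z') := max (log ((x-x')²/(y y'))) (|log (y/y')|) ⊔ 0` is a pseudo-metric:
nonnegative, vanishing on the diagonal, symmetric, and satisfying the triangle
inequality. -/
theorem brumfiel_pseudometric {F : Type*} [Field F] [LinearOrder F] [IsStrictOrderedRing F]
    -- `F` real closed:
    (hsq : ∀ a : F, 0 ≤ a → ∃ b : F, b ^ 2 = a)
    (hodd : ∀ p : Polynomial F, Odd p.natDegree → ∃ x : F, p.eval x = 0)
    (log : F → WithBot ℚ)
    (hzero : log 0 = ⊥)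
    (hnebot : ∀ a : F, 0 < a → log a ≠ ⊥)
    (hmono : ∀ a b : F, 0 < a → a ≤ b → log a ≤ log b)
    (hsurj : ∀ q : ℚ, ∃ a : F, 0 < a ∧ log a = (q : WithBot ℚ))
    (hmul : ∀ a b : F, 0 < a → 0 < b → log (a * b) = log a + log b)
    (hadd : ∀ a b : F, 0 < a → 0 < b → log (a + b) ≤ max (log a) (log b))
    (haddeq : ∀ a b : F, 0 < a → 0 < b → log a ≠ log b →
      log (a + b) = max (log a) (log b))
    -- the distance function on `H_F = {(x, y) : y > 0}`:
    (d : F × F → F × F → WithBot ℚ)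
    (hd : ∀ z z' : F × F,
      d z z' = max (log ((z.1 - z'.1) ^ 2 / (z.2 * z'.2)))
          (max (log (z.2 / z'.2)) (log (z'.2 / z.2))) ⊔ 0) :
    ∀ z z' z'' : F × F, 0 < z.2 → 0 < z'.2 → 0 < z''.2 →
      (0 ≤ d z z') ∧ (d z z = 0) ∧ (d z z' = d z' z) ∧
        (d z z'' ≤ d z z' + d z' z'') :=
  brumfiel_pseudometric_general log hzero hnebot hmono hmul hadd d hd
end

section
/- In the field of real Puiseux series F, with t_n := -1 + 1/2^n, a_n := \sum_{k=1}^n X^{t_k}, b_n := X^{t_n}, the sequence p_n := a_n + i b_n in the upper half plane H_F satisfies d(p_n, p_m) = t_n - t_m for all n ≤ m; in particular (p_n) is a Cauchy sequence for the pseudo-metric d. -/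
/-!
We model the field `F` of real Puiseux series inside the field of Hahn series
`HahnSeries ℚ ℝ`, via the exponent-reversing identification `X^t ↦ single (-t) 1`
(so that the paper's `X` is infinitely large and the leading-exponent logarithm
is `f ↦ -f.order`).  A Hahn series is a (real) Puiseux series iff its support
has bounded denominator.
-/

noncomputable section

/-- The ambient Hahn series field. -/
abbrev Fh := HahnSeries ℚ ℝ

/-- The leading-exponent logarithm `log : F_{≠0} → ℚ` (junk value `0` at `0`). -/
def llog (f : Fh) : ℚ := -f.order

/-- The monomial `X^t` of the paper. -/
def Xp (t : ℚ) : Fh := HahnSeries.single (-t) 1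

/-- `f` is a real Puiseux series: the denominators of its support are bounded. -/
def IsPuiseux (f : Fh) : Prop :=
  ∃ m : ℕ, 0 < m ∧ ∀ q ∈ f.support, ∃ k : ℤ, q = (k : ℚ) / m

/-- `f > 0` in the ordered field `F`: the leading coefficient is positive. -/
def FPos (f : Fh) : Prop := f ≠ 0 ∧ 0 < f.coeff f.order

/-- `t n := -1 + 1/2^n`. -/
def tseq (n : ℕ) : ℚ := -1 + 1 / 2 ^ n

/-- `a n := ∑_{k=1}^n X^{t_k}`. -/
def aseq (n : ℕ) : Fh := ∑ k ∈ Finset.Icc 1 n, Xp (tseq k)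

/-- `b n := X^{t_n}`. -/
def bseq (n : ℕ) : Fh := Xp (tseq n)

/-- Brumfiel's pseudo-distance on the upper half plane `H_F`:
`d(x+iy, x'+iy') = log (((x-x')² + y² + y'²)/(y y'))`. -/
def dH (x y x' y' : Fh) : ℚ := llog (((x - x') ^ 2 + y ^ 2 + y' ^ 2) / (y * y'))

/-!
Let `n ≤ m`. In the numerator `(a_n - a_m)² + b_n² + b_m²` of `d(p_n, p_m)`, the difference
`a_m - a_n` only involves the monomials `X^{t_k}` with `k > n`, so its square has leading
exponent at most `2 t_{n+1} < 2 t_n`, while `b_n² + b_m²` has leading exponent exactly `2 t_n`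
(the leading coefficients are positive, so nothing cancels). Dividing by
`b_n b_m = X^{t_n + t_m}` gives `d(p_n, p_m) = t_n - t_m`, and `(t_n)` converges.
-/

open HahnSeries

theorem HahnSeries.le_orderTop_sum {Γ R ι : Type*} [LinearOrder Γ] [AddCommMonoid R]
    (s : Finset ι) (f : ι → HahnSeries Γ R) {c : WithTop Γ}
    (h : ∀ i ∈ s, c ≤ (f i).orderTop) : c ≤ (∑ i ∈ s, f i).orderTop :=
  Finset.sum_induction f (fun x ↦ c ≤ x.orderTop)
    (fun _ _ hx hy ↦ (le_min hx hy).trans min_orderTop_le_orderTop_add) (by simp) h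

lemma Xp_ne_zero (t : ℚ) : Xp t ≠ 0 := single_ne_zero one_ne_zero

lemma orderTop_Xp (t : ℚ) : (Xp t).orderTop = ↑(-t) := orderTop_single one_ne_zero

lemma Xp_mul (s t : ℚ) : Xp s * Xp t = Xp (s + t) := by
  simp [Xp, single_mul_single, add_comm]

lemma Xp_sq (t : ℚ) : Xp t ^ 2 = Xp (2 * t) := by
  rw [sq, Xp_mul, two_mul]

lemma Xp_inv (t : ℚ) : (Xp t)⁻¹ = Xp (-t) :=
  inv_eq_of_mul_eq_one_right <| by rw [Xp_mul, add_neg_cancel, Xp, neg_zero, single_zero_one]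

lemma orderTop_Xp_add_Xp {s t : ℚ} (h : t ≤ s) : (Xp s + Xp t).orderTop = ↑(-s) := by
  rcases h.eq_or_lt with rfl | hlt
  · rw [Xp, ← single_add, orderTop_single (by norm_num)]
  · rw [orderTop_add_eq_left (by rw [orderTop_Xp, orderTop_Xp, WithTop.coe_lt_coe]; linarith),
      orderTop_Xp]

lemma llog_eq_of_orderTop_eq {f : Fh} {t : ℚ} (h : f.orderTop = ↑(-t)) : llog f = t := by
  have hf : f ≠ 0 := orderTop_ne_top.1 (by simp [h])
  have : f.order = -t := by exact_mod_cast (order_eq_orderTop_of_ne_zero hf).trans h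
  rw [llog, this, neg_neg]

lemma llog_div_Xp {f : Fh} (hf : f ≠ 0) (t : ℚ) : llog (f / Xp t) = llog f - t := by
  rw [div_eq_mul_inv, Xp_inv, llog, llog, order_mul hf (Xp_ne_zero _), Xp,
    order_single one_ne_zero]
  ring

lemma tseq_strictAnti : StrictAnti tseq := fun n m h ↦ by
  unfold tseq
  gcongr
  norm_num

lemma aseq_sub_aseq {n m : ℕ} (h : n ≤ m) :
    aseq m - aseq n = ∑ k ∈ Finset.Ioc n m, Xp (tseq k) := by
  have hIcc : ∀ j, Finset.Icc 1 j = Finset.Ioc 0 j := Finset.Icc_add_one_left_eq_Ioc 0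
  rw [aseq, aseq, hIcc, hIcc, ← Finset.sum_Ioc_consecutive _ (Nat.zero_le n) h,
    add_sub_cancel_left]

lemma orderTop_dH_numerator {n m : ℕ} (h : n ≤ m) :
    ((aseq n - aseq m) ^ 2 + bseq n ^ 2 + bseq m ^ 2).orderTop = ↑(-(2 * tseq n)) := by
  have hD : ((-tseq (n + 1) : ℚ) : WithTop ℚ) ≤ (aseq m - aseq n).orderTop := by
    rw [aseq_sub_aseq h]
    refine le_orderTop_sum _ _ fun k hk ↦ ?_
    rw [orderTop_Xp, WithTop.coe_le_coe, neg_le_neg_iff]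
    exact tseq_strictAnti.antitone (Finset.mem_Ioc.1 hk).1
  have hD2 : ((-(2 * tseq n) : ℚ) : WithTop ℚ) < ((aseq m - aseq n) ^ 2).orderTop :=
    calc ((-(2 * tseq n) : ℚ) : WithTop ℚ)
        < ((-tseq (n + 1) : ℚ) : WithTop ℚ) + ((-tseq (n + 1) : ℚ) : WithTop ℚ) := by
          norm_cast
          linarith [tseq_strictAnti n.lt_succ_self]
      _ ≤ ((aseq m - aseq n) ^ 2).orderTop := by
          rw [sq, orderTop_mul]
          exact add_le_add hD hD
  have hb : (Xp (2 * tseq n) + Xp (2 * tseq m)).orderTop = ↑(-(2 * tseq n)) :=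
    orderTop_Xp_add_Xp (by linarith [tseq_strictAnti.antitone h])
  rw [show (aseq n - aseq m) ^ 2 + bseq n ^ 2 + bseq m ^ 2
      = (Xp (2 * tseq n) + Xp (2 * tseq m)) + (aseq m - aseq n) ^ 2 by
        rw [bseq, bseq, Xp_sq, Xp_sq]; ring,
    orderTop_add_eq_left (hb ▸ hD2), hb]

lemma dH_aseq_bseq_of_le {n m : ℕ} (h : n ≤ m) :
    dH (aseq n) (bseq n) (aseq m) (bseq m) = tseq n - tseq m := by
  have hN := orderTop_dH_numerator h
  rw [dH, bseq, bseq, Xp_mul, ← bseq, ← bseq,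
    llog_div_Xp (orderTop_ne_top.1 (hN ▸ WithTop.coe_ne_top)), llog_eq_of_orderTop_eq hN]
  ring

lemma dH_symm (x y x' y' : Fh) : dH x y x' y' = dH x' y' x y := by
  unfold dH
  exact congrArg llog (by ring)

lemma dH_aseq_bseq (n m : ℕ) : dH (aseq n) (bseq n) (aseq m) (bseq m) = |tseq n - tseq m| := by
  rcases le_total n m with h | h
  · rw [dH_aseq_bseq_of_le h, abs_of_nonneg (sub_nonneg.2 (tseq_strictAnti.antitone h))]
  · rw [dH_symm, dH_aseq_bseq_of_le h, abs_sub_comm,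
      abs_of_nonneg (sub_nonneg.2 (tseq_strictAnti.antitone h))]

lemma tseq_cauchy {ε : ℚ} (hε : 0 < ε) :
    ∃ N : ℕ, ∀ n m : ℕ, N ≤ n → N ≤ m → |tseq n - tseq m| < ε := by
  obtain ⟨N, hN⟩ := exists_pow_lt_of_lt_one hε (show (1 / 2 : ℚ) < 1 by norm_num)
  have hsmall : ∀ n, N ≤ n → (1 : ℚ) / 2 ^ n < ε := fun n hn ↦
    calc (1 : ℚ) / 2 ^ n = (1 / 2) ^ n := by rw [div_pow, one_pow]
      _ ≤ (1 / 2) ^ N := pow_le_pow_of_le_one (by norm_num) (by norm_num) hn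
      _ < ε := hN
  refine ⟨N, fun n m hn hm ↦ ?_⟩
  rw [show tseq n - tseq m = 1 / 2 ^ n - 1 / 2 ^ m by unfold tseq; ring]
  exact abs_sub_lt_of_nonneg_of_lt (by positivity) (hsmall n hn) (by positivity) (hsmall m hm)

/-- `d(p_n, p_m) = t_n - t_m` for `n ≤ m`, where `p_n = a_n + i b_n`; in
particular `(p_n)` is a Cauchy sequence for the pseudo-metric `d`. -/
theorem dist_p_eq_and_cauchy :
    (∀ n m : ℕ, n ≤ m →
      dH (aseq n) (bseq n) (aseq m) (bseq m) = tseq n - tseq m) ∧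
    (∀ ε : ℚ, 0 < ε → ∃ N : ℕ, ∀ n m : ℕ, N ≤ n → N ≤ m →
      |dH (aseq n) (bseq n) (aseq m) (bseq m)| < ε) :=
  ⟨fun _ _ ↦ dH_aseq_bseq_of_le, fun _ hε ↦ (tseq_cauchy hε).imp fun _ hN n m hn hm ↦ by
    rw [dH_aseq_bseq, abs_abs]
    exact hN n m hn hm⟩
end
end

section
/- In the upper half plane over the real Puiseux series, if d(x + iy, x' + iy) = 0 for some y > 0, then d(x + i(y+t), x' + i(y+t)) = 0 for all t ≥ 0. -/
/-!
We model the field `F` of real Puiseux series inside the field of Hahn series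
`HahnSeries ℚ ℝ`, via the exponent-reversing identification `X^t ↦ single (-t) 1`
(so that the paper's `X` is infinitely large and the leading-exponent logarithm
is `f ↦ -f.order`).  A Hahn series is a (real) Puiseux series iff its support
has bounded denominator.
-/

noncomputable section

/-!
Everything is read off leading terms. For series with nonnegative leading coefficients no
cancellation can occur, so the order of a sum is the minimum of the orders. Hence, for `y > 0`,
`d(x+iy, x'+iy) = 0` says exactly that `y²` has order at most that of `(x-x')²`, i.e. that `y`
is at least as large as `x - x'` in the valuation. Adding `t ≥ 0` to `y` can only lower its order.
-/

namespace HahnSeries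

variable {Γ R : Type*} [LinearOrder Γ] [Zero Γ]

theorem orderTop_add_of_orderTop_eq [AddCommMonoid R] {x y : R⟦Γ⟧}
    (h : x.orderTop = y.orderTop) (hxy : x.leadingCoeff + y.leadingCoeff ≠ 0) :
    (x + y).orderTop = x.orderTop ∧ (x + y).leadingCoeff = x.leadingCoeff + y.leadingCoeff := by
  have hx : x ≠ 0 := by rintro rfl; simp_all [eq_comm]
  have hy : y ≠ 0 := by rintro rfl; simp_all
  have horder : y.order = x.order := by
    rwa [← WithTop.coe_inj, order_eq_orderTop_of_ne_zero hx, order_eq_orderTop_of_ne_zero hy,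
      eq_comm]
  have hcoeff : (x + y).coeff x.order = x.leadingCoeff + y.leadingCoeff := by
    rw [coeff_add, leadingCoeff_eq, leadingCoeff_eq, horder]
  have hsum : (x + y).orderTop = x.orderTop := by
    refine le_antisymm ?_ ?_
    · rw [← order_eq_orderTop_of_ne_zero hx]
      exact orderTop_le_of_coeff_ne_zero (hcoeff ▸ hxy)
    · simpa [h] using (min_orderTop_le_orderTop_add (x := x) (y := y))
  have hne : x + y ≠ 0 := by
    rw [← orderTop_ne_top, hsum, orderTop_ne_top]; exact hx
  have hord : (x + y).order = x.order := by
    rw [← WithTop.coe_inj, order_eq_orderTop_of_ne_zero hne, order_eq_orderTop_of_ne_zero hx, hsum]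
  exact ⟨hsum, by rw [leadingCoeff_eq, hord, hcoeff]⟩

variable [AddCommMonoid R] [PartialOrder R] [IsOrderedCancelAddMonoid R] {x y : R⟦Γ⟧}

theorem orderTop_add_of_leadingCoeff_nonneg (hx : 0 ≤ x.leadingCoeff) (hy : 0 ≤ y.leadingCoeff) :
    (x + y).orderTop = min x.orderTop y.orderTop ∧ 0 ≤ (x + y).leadingCoeff := by
  rcases lt_trichotomy x.orderTop y.orderTop with h | h | h
  · rw [orderTop_add_eq_left h, leadingCoeff_add_eq_left h, min_eq_left h.le]
    exact ⟨rfl, hx⟩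
  · by_cases hx0 : x = 0
    · simp [hx0, hy]
    have hxpos : 0 < x.leadingCoeff := hx.lt_of_ne' (leadingCoeff_ne_zero.mpr hx0)
    obtain ⟨hsum, hlead⟩ :=
      orderTop_add_of_orderTop_eq h (add_pos_of_pos_of_nonneg hxpos hy).ne'
    rw [hsum, hlead, ← h, min_self]
    exact ⟨rfl, add_nonneg hx hy⟩
  · rw [orderTop_add_eq_right h, leadingCoeff_add_eq_right h, min_eq_right h.le]
    exact ⟨rfl, hy⟩

theorem leadingCoeff_add_pos (hx : 0 < x.leadingCoeff) (hy : 0 ≤ y.leadingCoeff) :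
    0 < (x + y).leadingCoeff := by
  obtain ⟨hsum, hnonneg⟩ := orderTop_add_of_leadingCoeff_nonneg hx.le hy
  have hx0 : x ≠ 0 := leadingCoeff_ne_zero.mp hx.ne'
  have hne : x + y ≠ 0 := by
    rw [← orderTop_lt_top, hsum]
    exact (min_le_left _ _).trans_lt (orderTop_lt_top.mpr hx0)
  exact hnonneg.lt_of_ne' (leadingCoeff_ne_zero.mpr hne)

end HahnSeries

open HahnSeries

theorem fPos_iff_leadingCoeff_pos {f : Fh} : FPos f ↔ 0 < f.leadingCoeff := by
  rw [FPos, leadingCoeff_eq]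
  refine ⟨And.right, fun h => ⟨?_, h⟩⟩
  rw [← leadingCoeff_ne_zero, leadingCoeff_eq]
  exact h.ne'

theorem llog_div_eq_zero_iff {N D : Fh} (hN : N ≠ 0) (hD : D ≠ 0) :
    llog (N / D) = 0 ↔ N.orderTop = D.orderTop := by
  have horder : N.order = (N / D).order + D.order := by
    conv_lhs => rw [← div_mul_cancel₀ N hD]
    exact order_mul (div_ne_zero hN hD) hD
  rw [← order_eq_orderTop_of_ne_zero hN, ← order_eq_orderTop_of_ne_zero hD, WithTop.coe_inj, llog,
    neg_eq_zero, horder]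
  constructor <;> intro h <;> linarith

theorem dH_self_eq_zero_iff {x x' y : Fh} (hy : 0 < y.leadingCoeff) :
    dH x y x' y = 0 ↔ (y ^ 2).orderTop ≤ ((x - x') ^ 2).orderTop := by
  have hsq : ∀ z : Fh, 0 ≤ (z ^ 2).leadingCoeff := fun z => by
    rw [sq, leadingCoeff_mul]; exact mul_self_nonneg _
  have hy2 : 0 < (y ^ 2).leadingCoeff := by rw [sq, leadingCoeff_mul]; exact mul_pos hy hy
  obtain ⟨hinner, hinner_nonneg⟩ := orderTop_add_of_leadingCoeff_nonneg (hsq (x - x')) hy2.le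
  obtain ⟨hnum, -⟩ := orderTop_add_of_leadingCoeff_nonneg hinner_nonneg hy2.le
  have hy2_ne : y ^ 2 ≠ 0 := leadingCoeff_ne_zero.mp hy2.ne'
  have hnum_ne : (x - x') ^ 2 + y ^ 2 + y ^ 2 ≠ 0 := by
    rw [← orderTop_lt_top, hnum]
    exact (min_le_right _ _).trans_lt (orderTop_lt_top.mpr hy2_ne)
  rw [dH, ← sq, llog_div_eq_zero_iff hnum_ne hy2_ne, hnum, hinner, min_assoc, min_self,
    min_eq_right_iff]

/-- If `d(x+iy, x'+iy) = 0` for some `y > 0`, then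
`d(x+i(y+t), x'+i(y+t)) = 0` for all `t ≥ 0` (i.e. `t = 0` or `t > 0`). -/
theorem dist_zero_above :
    ∀ x x' y t : Fh, FPos y → dH x y x' y = 0 → (t = 0 ∨ FPos t) →
      dH x (y + t) x' (y + t) = 0 := by
  intro x x' y t hy hd ht
  rw [fPos_iff_leadingCoeff_pos] at hy
  have ht : 0 ≤ t.leadingCoeff := by
    rcases ht with rfl | ht
    · simp
    · exact (fPos_iff_leadingCoeff_pos.mp ht).le
  rw [dH_self_eq_zero_iff hy] at hd
  rw [dH_self_eq_zero_iff (leadingCoeff_add_pos hy ht)]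
  have hyt : (y + t).orderTop ≤ y.orderTop := by
    rw [(orderTop_add_of_leadingCoeff_nonneg hy.le ht).1]
    exact min_le_left _ _
  calc ((y + t) ^ 2).orderTop = (y + t).orderTop + (y + t).orderTop := by rw [sq, orderTop_mul]
    _ ≤ y.orderTop + y.orderTop := add_le_add hyt hyt
    _ = (y ^ 2).orderTop := by rw [sq, orderTop_mul]
    _ ≤ ((x - x') ^ 2).orderTop := hd
end
end

section
/- For the vertical lines ℓ_n = a_n + i F_{>0} in the Puiseux upper half-plane: if b ∈ F_{>0} with log(b) < t_{n+1}, then d(a_n + ib, a_{n+1} + ib') > 0 for every b' ∈ F_{>0}. -/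
/-!
We model the field `F` of real Puiseux series inside the field of Hahn series
`HahnSeries ℚ ℝ`, via the exponent-reversing identification `X^t ↦ single (-t) 1`
(so that the paper's `X` is infinitely large and the leading-exponent logarithm
is `f ↦ -f.order`).  A Hahn series is a (real) Puiseux series iff its support
has bounded denominator.
-/

noncomputable section

/-!
Positivity in `F` is positivity in the lexicographic order on Hahn series, and for `0 < x ≤ y`
the series `y` cannot have larger order than `x`; so the leading-exponent logarithm is monotone
on positive elements. With `t = t_{n+1}` the numerator of `d(a_n + ib, a_{n+1} + ib')` is
`X^{2t} + b² + b'²`, so its logarithm is at least `2t` and at least `2 log b'`; the average of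
these bounds exceeds `log b + log b'` because `log b < t`.
-/

open HahnSeries

namespace HahnSeries

variable {Γ R : Type*} [LinearOrder Γ] [AddCommGroup R] [LinearOrder R] [IsOrderedAddMonoid R]

theorem orderTop_le_orderTop_of_toLex_le {x y : R⟦Γ⟧} (hx : 0 ≤ toLex x)
    (hxy : toLex x ≤ toLex y) : y.orderTop ≤ x.orderTop := by
  by_contra! h
  have hyx := abs_lt_abs_of_orderTop_ofLex (x := toLex y) (y := toLex x) h
  rw [abs_of_nonneg hx, abs_of_nonneg (hx.trans hxy)] at hyx
  exact hyx.not_ge hxy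

theorem order_le_order_of_toLex_le [Zero Γ] {x y : R⟦Γ⟧} (hx : 0 < toLex x)
    (hxy : toLex x ≤ toLex y) : y.order ≤ x.order := by
  have hx0 : x ≠ 0 := hx.ne'
  have hy0 : y ≠ 0 := (hx.trans_le hxy).ne'
  have := orderTop_le_orderTop_of_toLex_le hx.le hxy
  rwa [← order_eq_orderTop_of_ne_zero hy0, ← order_eq_orderTop_of_ne_zero hx0,
    WithTop.coe_le_coe] at this

end HahnSeries

theorem fPos_iff_pos_toLex {f : Fh} : FPos f ↔ 0 < toLex f := by
  rw [← leadingCoeff_pos_iff, ofLex_toLex, leadingCoeff_eq]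
  refine ⟨And.right, fun h ↦ ⟨?_, h⟩⟩
  rintro rfl
  simp at h

theorem llog_le_llog {x y : Fh} (hx : 0 < toLex x) (hxy : toLex x ≤ toLex y) :
    llog x ≤ llog y :=
  neg_le_neg_iff.mpr (Rat.cast_le.mpr (order_le_order_of_toLex_le hx hxy))

theorem llog_mul {x y : Fh} (hx : x ≠ 0) (hy : y ≠ 0) : llog (x * y) = llog x + llog y := by
  simp only [llog, order_mul hx hy, neg_add]

theorem llog_inv {x : Fh} (hx : x ≠ 0) : llog x⁻¹ = -llog x := by
  have h := llog_mul hx (inv_ne_zero hx)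
  rw [mul_inv_cancel₀ hx, llog, order_one, neg_zero] at h
  linarith

theorem llog_div {x y : Fh} (hx : x ≠ 0) (hy : y ≠ 0) : llog (x / y) = llog x - llog y := by
  rw [div_eq_mul_inv, llog_mul hx (inv_ne_zero hy), llog_inv hy, sub_eq_add_neg]

theorem llog_sq {x : Fh} (hx : x ≠ 0) : llog (x ^ 2) = 2 * llog x := by
  rw [sq, llog_mul hx hx, two_mul]

theorem llog_Xp (t : ℚ) : llog (Xp t) = t := by
  simp [llog, Xp, order_single]

theorem Xp_pos (t : ℚ) : 0 < toLex (Xp t) := by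
  rw [← leadingCoeff_pos_iff]
  simp [Xp]

theorem aseq_succ (n : ℕ) : aseq (n + 1) = aseq n + Xp (tseq (n + 1)) :=
  Finset.sum_Icc_succ_top (by omega) _

/-- If `b > 0` with `log b < t_{n+1}`, then `d(a_n + ib, a_{n+1} + ib') > 0` for
every `b' > 0`. -/
theorem dist_pos_of_log_lt :
    ∀ (n : ℕ) (b b' : Fh), FPos b → FPos b' → llog b < tseq (n + 1) →
      0 < dH (aseq n) b (aseq (n + 1)) b' := by
  intro n b b' hb hb' hlog
  rw [fPos_iff_pos_toLex] at hb hb'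
  set t := tseq (n + 1)
  set N := Xp t ^ 2 + b ^ 2 + b' ^ 2
  have hX := Xp_pos t
  have hsq : (aseq n - aseq (n + 1)) ^ 2 = Xp t ^ 2 := by rw [aseq_succ]; ring
  have hN : toLex N = toLex (Xp t) ^ 2 + toLex b ^ 2 + toLex b' ^ 2 := rfl
  have hN_ge_X : llog (Xp t ^ 2) ≤ llog N := llog_le_llog (pow_pos hX 2) <| by
    rw [hN, toLex_pow]; linarith [sq_nonneg (toLex b), sq_nonneg (toLex b')]
  have hN_ge_b' : llog (b' ^ 2) ≤ llog N := llog_le_llog (pow_pos hb' 2) <| by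
    rw [hN, toLex_pow]; linarith [sq_nonneg (toLex (Xp t)), sq_nonneg (toLex b)]
  have hN0 : N ≠ 0 := (hN ▸ by positivity : 0 < toLex N).ne'
  have hX0 : Xp t ≠ 0 := hX.ne'
  have hb0 : b ≠ 0 := hb.ne'
  have hb'0 : b' ≠ 0 := hb'.ne'
  rw [dH, hsq, llog_div hN0 (mul_ne_zero hb0 hb'0), llog_mul hb0 hb'0]
  rw [llog_sq hX0, llog_Xp] at hN_ge_X
  rw [llog_sq hb'0] at hN_ge_b'
  linarith
end
end
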